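/- Let d ∈ {2,3} and s ∈ [0, 1/2]. There exists a constant C > 0, depending only on d and s, such that for all k, t > 0 with kt ≥ 1 and all measurable functions F, G : ℝ^d → [0, ∞), ∫_{{ξ : kt/2 < ‖ξ⁻‖ < 3kt/2 and |ξ_d| > kt/2}} k² (1 + ‖ξ‖²)^s / |den_{k,t}(ξ)| · F(ξ) G(ξ) dξ ≤ C k^{2s} t^{2s−2} ‖F‖_{L²(ℝ^d)} ‖G‖_{L²(ℝ^d)}. -/

import Mathlib

open MeasureTheory
open scoped ENNReal

/-! On the region `|den| ≥ |Im den| ≥ 2kt|ξ_d|`, and `1 + ‖ξ‖² ≤ (4|ξ_d|)²` because `kt ≥ 1`,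
`‖ξ⁻‖ < 3kt/2` and `kt < 2|ξ_d|`. As `2s − 1 ≤ 0` and `4|ξ_d| > 2kt`, this gives
`(1 + ‖ξ‖²)^s ≤ (4|ξ_d|)^(2s−1) · 4|ξ_d| ≤ (kt)^(2s−1) · 4|ξ_d|`, so the weight
`k²(1 + ‖ξ‖²)^s / |den|` is at most `2k²(kt)^(2s−2) = 2k^(2s) t^(2s−2)` pointwise, and
Cauchy–Schwarz gives the claim. -/

/-- `‖ξ⁻‖`, the Euclidean norm of the first `d − 1` coordinates of `ξ ∈ ℝ^d`. -/
noncomputable def xiMinusNorm {d : ℕ} (ξ : EuclideanSpace ℝ (Fin d)) : ℝ :=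
  Real.sqrt (∑ i ∈ Finset.univ.filter (fun i : Fin d => (i : ℕ) < d - 1), ξ i ^ 2)

/-- `ξ_d`, the last coordinate of `ξ ∈ ℝ^d`. -/
noncomputable def xiLast {d : ℕ} (hd : 0 < d) (ξ : EuclideanSpace ℝ (Fin d)) : ℝ :=
  ξ ⟨d - 1, Nat.sub_lt hd one_pos⟩

/-- The symbol denominator `den_{k,t}(ξ) = (‖ξ⁻‖² − k²t² + ξ_d²) + 2ik√(t²+1)ξ_d`. -/
noncomputable def denom (k t : ℝ) {d : ℕ} (hd : 0 < d) (ξ : EuclideanSpace ℝ (Fin d)) : ℂ :=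
  ((xiMinusNorm ξ ^ 2 - k ^ 2 * t ^ 2 + xiLast hd ξ ^ 2 : ℝ) : ℂ)
    + 2 * Complex.I * (k : ℂ) * (Real.sqrt (t ^ 2 + 1) : ℂ) * (xiLast hd ξ : ℂ)

lemma ENNReal.lintegral_ofReal_mul_le {α : Type*} [MeasurableSpace α] (μ : Measure α)
    {F G : α → ℝ} (hF : Measurable F) (hG : Measurable G)
    (hF0 : ∀ x, 0 ≤ F x) (hG0 : ∀ x, 0 ≤ G x) :
    ∫⁻ x, ENNReal.ofReal (F x * G x) ∂μ ≤
      (∫⁻ x, ENNReal.ofReal (F x ^ 2) ∂μ) ^ (1 / 2 : ℝ)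
        * (∫⁻ x, ENNReal.ofReal (G x ^ 2) ∂μ) ^ (1 / 2 : ℝ) := by
  have hsq : ∀ {H : α → ℝ}, (∀ x, 0 ≤ H x) →
      (fun x => ENNReal.ofReal (H x ^ 2)) = fun x => ENNReal.ofReal (H x) ^ (2 : ℝ) :=
    fun hH0 => funext fun x => by rw [ENNReal.rpow_two, ENNReal.ofReal_pow (hH0 x)]
  simp_rw [ENNReal.ofReal_mul (hF0 _), hsq hF0, hsq hG0]
  exact ENNReal.lintegral_mul_le_Lp_mul_Lq μ .two_two
    (ENNReal.measurable_ofReal.comp hF).aemeasurable (ENNReal.measurable_ofReal.comp hG).aemeasurable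

lemma setLIntegral_ofReal_weight_mul_le {α : Type*} [MeasurableSpace α] (μ : Measure α)
    {S : Set α} {w F G : α → ℝ} {M : ℝ} (hF : Measurable F) (hG : Measurable G)
    (hF0 : ∀ x, 0 ≤ F x) (hG0 : ∀ x, 0 ≤ G x) (hw : ∀ x ∈ S, w x ≤ M) :
    ∫⁻ x in S, ENNReal.ofReal (w x * F x * G x) ∂μ ≤
      ENNReal.ofReal M * (∫⁻ x, ENNReal.ofReal (F x ^ 2) ∂μ) ^ (1 / 2 : ℝ)
        * (∫⁻ x, ENNReal.ofReal (G x ^ 2) ∂μ) ^ (1 / 2 : ℝ) := by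
  have hFG : Measurable fun x => ENNReal.ofReal (F x * G x) :=
    ENNReal.measurable_ofReal.comp (hF.mul hG)
  calc ∫⁻ x in S, ENNReal.ofReal (w x * F x * G x) ∂μ
      ≤ ∫⁻ x in S, ENNReal.ofReal M * ENNReal.ofReal (F x * G x) ∂μ :=
        setLIntegral_mono (hFG.const_mul _) fun x hx => by
          rw [← ENNReal.ofReal_mul' (mul_nonneg (hF0 x) (hG0 x)), mul_assoc]
          exact ENNReal.ofReal_le_ofReal
            (mul_le_mul_of_nonneg_right (hw x hx) (mul_nonneg (hF0 x) (hG0 x)))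
    _ ≤ ∫⁻ x, ENNReal.ofReal M * ENNReal.ofReal (F x * G x) ∂μ := setLIntegral_le_lintegral _ _
    _ = ENNReal.ofReal M * ∫⁻ x, ENNReal.ofReal (F x * G x) ∂μ := lintegral_const_mul _ hFG
    _ ≤ _ := by
        rw [mul_assoc]
        exact mul_le_mul_right (ENNReal.lintegral_ofReal_mul_le μ hF hG hF0 hG0) _

lemma norm_sq_eq_xiMinusNorm_sq_add_xiLast_sq {d : ℕ} (hd : 0 < d)
    (ξ : EuclideanSpace ℝ (Fin d)) :
    ‖ξ‖ ^ 2 = xiMinusNorm ξ ^ 2 + xiLast hd ξ ^ 2 := by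
  have hlast : Finset.univ.filter (fun i : Fin d => ¬ (i : ℕ) < d - 1)
      = {⟨d - 1, Nat.sub_lt hd one_pos⟩} := by
    ext i
    simp only [Finset.mem_filter, Finset.mem_univ, true_and, Finset.mem_singleton, Fin.ext_iff]
    omega
  rw [EuclideanSpace.real_norm_sq_eq, xiMinusNorm,
    Real.sq_sqrt (Finset.sum_nonneg fun i _ => sq_nonneg _),
    ← Finset.sum_filter_add_sum_filter_not Finset.univ (fun i : Fin d => (i : ℕ) < d - 1), hlast,
    Finset.sum_singleton, xiLast]

lemma mul_abs_xiLast_le_norm_denom {d : ℕ} (hd : 0 < d) {k t : ℝ} (hk : 0 < k)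
    (ξ : EuclideanSpace ℝ (Fin d)) :
    2 * k * t * |xiLast hd ξ| ≤ ‖denom k t hd ξ‖ := by
  have ht : t ≤ Real.sqrt (t ^ 2 + 1) := Real.le_sqrt_of_sq_le (by linarith)
  calc 2 * k * t * |xiLast hd ξ| ≤ |2 * k * Real.sqrt (t ^ 2 + 1) * xiLast hd ξ| := by
        rw [abs_mul, abs_of_nonneg (by positivity : (0:ℝ) ≤ 2 * k * Real.sqrt (t ^ 2 + 1))]
        gcongr
    _ = |(denom k t hd ξ).im| := by
        congr 1
        simp [denom, -Complex.ofReal_pow]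
    _ ≤ ‖denom k t hd ξ‖ := Complex.abs_im_le_norm _

lemma rpow_div_le_of_half_lt {s a y A B : ℝ} (hs : 0 ≤ s) (hs' : s ≤ 1 / 2) (ha : 0 < a)
    (hy : a / 2 < y) (hA : 2 * a * y ≤ A) (hB0 : 0 ≤ B) (hB : B ≤ (4 * y) ^ 2) :
    B ^ s / A ≤ 2 * a ^ (2 * s - 2) := by
  have hy0 : 0 < y := by linarith
  have hexp : 2 * s - 1 ≤ 0 := by linarith
  have hBs : B ^ s ≤ (4 * y) ^ (2 * s - 1) * (4 * y) := by
    calc B ^ s ≤ ((4 * y) ^ 2) ^ s := Real.rpow_le_rpow hB0 hB hs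
      _ = (4 * y) ^ (2 * s - 1 + 1) := by
          rw [sub_add_cancel, ← Real.rpow_natCast, ← Real.rpow_mul (by positivity)]
          norm_num
      _ = (4 * y) ^ (2 * s - 1) * (4 * y) := Real.rpow_add_one (by positivity) _
  have hpow : (4 * y) ^ (2 * s - 1) ≤ a ^ (2 * s - 1) :=
    calc (4 * y) ^ (2 * s - 1) ≤ (2 * a) ^ (2 * s - 1) :=
          Real.rpow_le_rpow_of_nonpos (by positivity) (by linarith) hexp
      _ = 2 ^ (2 * s - 1) * a ^ (2 * s - 1) := Real.mul_rpow (by norm_num) ha.le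
      _ ≤ 1 * a ^ (2 * s - 1) := by
          gcongr
          exact Real.rpow_le_one_of_one_le_of_nonpos (by norm_num) hexp
      _ = a ^ (2 * s - 1) := one_mul _
  rw [div_le_iff₀ ((by positivity : 0 < 2 * a * y).trans_le hA)]
  calc B ^ s ≤ a ^ (2 * s - 1) * (4 * y) :=
        hBs.trans (mul_le_mul_of_nonneg_right hpow (by positivity))
    _ = 2 * a ^ (2 * s - 1 - 1) * (2 * a * y) := by
        rw [Real.rpow_sub_one ha.ne' (2 * s - 1)]
        field_simp
        ring
    _ ≤ 2 * a ^ (2 * s - 2) * A := by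
        rw [show 2 * s - 1 - 1 = 2 * s - 2 by ring]
        gcongr

lemma sq_mul_mul_rpow {k t : ℝ} (hk : 0 < k) (ht : 0 < t) (r : ℝ) :
    k ^ 2 * (k * t) ^ (r - 2) = k ^ r * t ^ (r - 2) := by
  rw [Real.mul_rpow hk.le ht.le, ← mul_assoc, ← Real.rpow_natCast, ← Real.rpow_add hk]
  norm_num

lemma weight_le_of_mem_region {d : ℕ} (hd : 0 < d) {s k t : ℝ} (hs : 0 ≤ s) (hs' : s ≤ 1 / 2)
    (hk : 0 < k) (ht : 0 < t) (hkt : 1 ≤ k * t) {ξ : EuclideanSpace ℝ (Fin d)}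
    (hminus : xiMinusNorm ξ < 3 * k * t / 2) (hlast : k * t / 2 < |xiLast hd ξ|) :
    k ^ 2 * (1 + ‖ξ‖ ^ 2) ^ s / ‖denom k t hd ξ‖ ≤ 2 * k ^ (2 * s) * t ^ (2 * s - 2) := by
  have hB : 1 + ‖ξ‖ ^ 2 ≤ (4 * |xiLast hd ξ|) ^ 2 := by
    have hminus0 : 0 ≤ xiMinusNorm ξ := Real.sqrt_nonneg _
    rw [norm_sq_eq_xiMinusNorm_sq_add_xiLast_sq hd, ← sq_abs (xiLast hd ξ)]
    nlinarith
  calc k ^ 2 * (1 + ‖ξ‖ ^ 2) ^ s / ‖denom k t hd ξ‖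
      = k ^ 2 * ((1 + ‖ξ‖ ^ 2) ^ s / ‖denom k t hd ξ‖) := mul_div_assoc _ _ _
    _ ≤ k ^ 2 * (2 * (k * t) ^ (2 * s - 2)) := by
        gcongr
        exact rpow_div_le_of_half_lt hs hs' (by positivity) hlast
          (by simpa only [mul_assoc] using mul_abs_xiLast_le_norm_denom hd hk ξ) (by positivity) hB
    _ = 2 * k ^ (2 * s) * t ^ (2 * s - 2) := by
        rw [mul_left_comm, sq_mul_mul_rpow hk ht, mul_assoc]

/-- Estimate of the term `II₁`, over the region
`{ξ : kt/2 < ‖ξ⁻‖ < 3kt/2, |ξ_d| > kt/2}`, in the unique continuation argument. -/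
theorem stmt_7 (d : ℕ) (hd : d = 2 ∨ d = 3) (s : ℝ) (hs : 0 ≤ s) (hs' : s ≤ 1 / 2) :
    ∃ C > (0 : ℝ), ∀ k t : ℝ, 0 < k → 0 < t → 1 ≤ k * t →
      ∀ F G : EuclideanSpace ℝ (Fin d) → ℝ, Measurable F → Measurable G →
        (∀ ξ, 0 ≤ F ξ) → (∀ ξ, 0 ≤ G ξ) →
        (∫⁻ ξ in {ξ | k * t / 2 < xiMinusNorm ξ ∧ xiMinusNorm ξ < 3 * k * t / 2
              ∧ k * t / 2 < |xiLast (by omega) ξ|},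
            ENNReal.ofReal (k ^ 2 * (1 + ‖ξ‖ ^ 2) ^ s
              / ‖denom k t (by omega) ξ‖ * F ξ * G ξ)) ≤
          ENNReal.ofReal (C * k ^ (2 * s) * t ^ (2 * s - 2))
            * (∫⁻ ξ, ENNReal.ofReal (F ξ ^ 2)) ^ (1 / 2 : ℝ)
            * (∫⁻ ξ, ENNReal.ofReal (G ξ ^ 2)) ^ (1 / 2 : ℝ) := by
  refine ⟨2, two_pos, fun k t hk ht hkt F G hF hG hF0 hG0 => ?_⟩
  exact setLIntegral_ofReal_weight_mul_le volume hF hG hF0 hG0 fun ξ ⟨_, hminus, hlast⟩ =>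
    weight_le_of_mem_region (by omega) hs hs' hk ht hkt hminus hlast
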